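/- The 15 maps N_{i,1} := T_i, N_{i,2} := (λ_{i+2} − λ_{i+1})·T_i, B_{i,1} := λ_i·T_i, B_{i,2} := λ_i λ_{i+1}·T_i, B_{i,3} := λ_i λ_{i+2}·T_i (i = 1,2,3, indices modulo 3) all belong to X_T and form a basis of X_T; in particular, X_T has dimension 15. -/
import Mathlib

open MeasureTheory Matrix

noncomputable section

/-- `γ_i(s) = (1-s)·x_{i+1} + s·x_{i+2}`, parametrization of edge `e_i`. -/
def edgePt (x : Fin 3 → Fin 2 → ℝ) (i : Fin 3) (s : ℝ) : Fin 2 → ℝ :=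
  (1 - s) • x (i + 1) + s • x (i + 2)

/-- `n i` is the outward unit normal on the edge `e_i = [x_{i+1}, x_{i+2}]`. -/
def IsOuterNormal (x n : Fin 3 → Fin 2 → ℝ) : Prop :=
  ∀ i : Fin 3, n i ⬝ᵥ n i = 1 ∧ n i ⬝ᵥ (x (i + 2) - x (i + 1)) = 0 ∧
    0 < n i ⬝ᵥ (x (i + 1) - x i)

/-- A real-valued function on the plane given by a polynomial of total degree at most 2. -/
def IsPolyDeg2 (f : (Fin 2 → ℝ) → ℝ) : Prop :=
  ∃ p : MvPolynomial (Fin 2) ℝ, p.totalDegree ≤ 2 ∧ ∀ y, f y = MvPolynomial.eval y p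

/-- Membership in the local space `X_T`. -/
def MemXT (x n : Fin 3 → Fin 2 → ℝ)
    (τ : (Fin 2 → ℝ) → Matrix (Fin 2) (Fin 2) ℝ) : Prop :=
  (∀ y, (τ y)ᵀ = τ y) ∧
  (∀ k l : Fin 2, IsPolyDeg2 fun y => τ y k l) ∧
  (∀ i : Fin 3, ∃ a b : ℝ, ∀ s : ℝ,
    n i ⬝ᵥ (τ (edgePt x i s)).mulVec (n i) = a * s + b)

/-- The symmetric part `sym(A) = (A + Aᵀ)/2`. -/
def symPart (A : Matrix (Fin 2) (Fin 2) ℝ) : Matrix (Fin 2) (Fin 2) ℝ :=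
  (1 / 2 : ℝ) • (A + Aᵀ)

/-- `T_i = sym(t_{i+1} t_{i+2}ᵀ) / ((n_i·t_{i+1})(n_i·t_{i+2}))`. -/
def TT (t n : Fin 3 → Fin 2 → ℝ) (i : Fin 3) : Matrix (Fin 2) (Fin 2) ℝ :=
  ((n i ⬝ᵥ t (i + 1)) * (n i ⬝ᵥ t (i + 2)))⁻¹ • symPart (vecMulVec (t (i + 1)) (t (i + 2)))

/-- The fifteen maps `N_{i,1}, N_{i,2}, B_{i,1}, B_{i,2}, B_{i,3}` (`i = 0,1,2`),
indexed by `Fin 3 × Fin 5` (second component: `0 ↦ N_{i,1}`, `1 ↦ N_{i,2}`,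
`2 ↦ B_{i,1}`, `3 ↦ B_{i,2}`, `4 ↦ B_{i,3}`). -/
def famXT (lam : Fin 3 → (Fin 2 → ℝ) → ℝ) (t n : Fin 3 → Fin 2 → ℝ) :
    Fin 3 × Fin 5 → (Fin 2 → ℝ) → Matrix (Fin 2) (Fin 2) ℝ := fun p y =>
  if p.2 = 0 then TT t n p.1
  else if p.2 = 1 then (lam (p.1 + 2) y - lam (p.1 + 1) y) • TT t n p.1
  else if p.2 = 2 then lam p.1 y • TT t n p.1
  else if p.2 = 3 then (lam p.1 y * lam (p.1 + 1) y) • TT t n p.1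
  else (lam p.1 y * lam (p.1 + 2) y) • TT t n p.1

lemma XTaux_qsum {m : Type*} [Fintype m] (F : m → Matrix (Fin 2) (Fin 2) ℝ) (u v : Fin 2 → ℝ) :
    u ⬝ᵥ (∑ p, F p).mulVec v = ∑ p, u ⬝ᵥ (F p).mulVec v := by
  simp only [Matrix.mulVec, dotProduct, Matrix.sum_apply, Fin.sum_univ_two,
    Finset.mul_sum, Finset.sum_mul, ← Finset.sum_add_distrib]

lemma XTaux_qsmul (a : ℝ) (A : Matrix (Fin 2) (Fin 2) ℝ) (u v : Fin 2 → ℝ) :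
    u ⬝ᵥ (a • A).mulVec v = a * (u ⬝ᵥ A.mulVec v) := by
  simp [Matrix.mulVec, dotProduct, Fin.sum_univ_two]; ring

lemma XTaux_affine_poly (g : Fin 2 → ℝ) (c : ℝ) :
    ∃ p : MvPolynomial (Fin 2) ℝ, p.totalDegree ≤ 1 ∧
      ∀ y : Fin 2 → ℝ, g ⬝ᵥ y + c = MvPolynomial.eval y p := by
  classical
  refine ⟨MvPolynomial.C c + MvPolynomial.C (g 0) * MvPolynomial.X 0
      + MvPolynomial.C (g 1) * MvPolynomial.X 1, ?_, ?_⟩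
  · apply le_trans (MvPolynomial.totalDegree_add _ _)
    have h1 : (MvPolynomial.C (g 0) * MvPolynomial.X 0 : MvPolynomial (Fin 2) ℝ).totalDegree ≤ 1 := by
      refine le_trans (MvPolynomial.totalDegree_mul _ _) ?_
      simp [MvPolynomial.totalDegree_X]
    have h2 : (MvPolynomial.C (g 1) * MvPolynomial.X 1 : MvPolynomial (Fin 2) ℝ).totalDegree ≤ 1 := by
      refine le_trans (MvPolynomial.totalDegree_mul _ _) ?_
      simp [MvPolynomial.totalDegree_X]
    have h0 : (MvPolynomial.C c : MvPolynomial (Fin 2) ℝ).totalDegree ≤ 1 := by simp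
    exact max_le (le_trans (MvPolynomial.totalDegree_add _ _) (max_le h0 h1)) h2
  · intro y; simp [dotProduct, Fin.sum_univ_two]; ring

lemma XTaux_cross (p q u v pj qj : ℝ) (h1 : p * u + q * v = 0) (h2 : pj * q - qj * p = 0)
    (hp : p ≠ 0 ∨ q ≠ 0) : pj * u + qj * v = 0 := by
  rcases hp with hp | hq
  · have h : p * (pj * u + qj * v) = 0 := by linear_combination pj * h1 - v * h2
    rcases mul_eq_zero.mp h with h' | h'
    · exact absurd h' hp
    · exact h'
  · have h : q * (pj * u + qj * v) = 0 := by linear_combination qj * h1 + u * h2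
    rcases mul_eq_zero.mp h with h' | h'
    · exact absurd h' hq
    · exact h'

lemma XTaux_cramer (p0 q0 p1 q1 p2 q2 a b c : ℝ)
    (hE0 : a * p0 ^ 2 + 2 * b * (p0 * q0) + c * q0 ^ 2 = 0)
    (hE1 : a * p1 ^ 2 + 2 * b * (p1 * q1) + c * q1 ^ 2 = 0)
    (hE2 : a * p2 ^ 2 + 2 * b * (p2 * q2) + c * q2 ^ 2 = 0)
    (hd01 : p0 * q1 - q0 * p1 ≠ 0) (hd02 : p0 * q2 - q0 * p2 ≠ 0)
    (hd12 : p1 * q2 - q1 * p2 ≠ 0) : a = 0 ∧ b = 0 ∧ c = 0 := by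
  set d01 := p0 * q1 - q0 * p1 with hd01def
  set d02 := p0 * q2 - q0 * p2 with hd02def
  set d12 := p1 * q2 - q1 * p2 with hd12def
  have hD : (2 : ℝ) * d01 * d02 * d12 ≠ 0 :=
    mul_ne_zero (mul_ne_zero (mul_ne_zero two_ne_zero hd01) hd02) hd12
  have ha : a * (2 * d01 * d02 * d12) = 0 := by
    rw [hd01def, hd02def, hd12def]
    linear_combination (2 * q1 * q2 * (p1 * q2 - q1 * p2)) * hE0
      - (2 * q0 * q2 * (p0 * q2 - q0 * p2)) * hE1 + (2 * q0 * q1 * (p0 * q1 - q0 * p1)) * hE2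
  have hb : b * (2 * d01 * d02 * d12) = 0 := by
    rw [hd01def, hd02def, hd12def]
    linear_combination (-(p1 * q2 - q1 * p2) * (p1 * q2 + q1 * p2)) * hE0
      + ((p0 * q2 - q0 * p2) * (p0 * q2 + q0 * p2)) * hE1
      - ((p0 * q1 - q0 * p1) * (p0 * q1 + q0 * p1)) * hE2
  have hc : c * (2 * d01 * d02 * d12) = 0 := by
    rw [hd01def, hd02def, hd12def]
    linear_combination (2 * p1 * p2 * (p1 * q2 - q1 * p2)) * hE0
      - (2 * p0 * p2 * (p0 * q2 - q0 * p2)) * hE1 + (2 * p0 * p1 * (p0 * q1 - q0 * p1)) * hE2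
  refine ⟨?_, ?_, ?_⟩
  · rcases mul_eq_zero.mp ha with h | h; exact h; exact absurd h hD
  · rcases mul_eq_zero.mp hb with h | h; exact h; exact absurd h hD
  · rcases mul_eq_zero.mp hc with h | h; exact h; exact absurd h hD

lemma XTaux_poly2_repr (p : MvPolynomial (Fin 2) ℝ) (hp : p.totalDegree ≤ 2) :
    ∃ A : ℕ → ℕ → ℝ, ∀ y : Fin 2 → ℝ,
      MvPolynomial.eval y p = A 0 0 + A 1 0 * y 0 + A 0 1 * y 1
        + A 2 0 * y 0 ^ 2 + A 1 1 * (y 0 * y 1) + A 0 2 * y 1 ^ 2 := by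
  classical
  set F : ℕ × ℕ → (Fin 2 →₀ ℕ) := fun ij => Finsupp.equivFunOnFinite.symm ![ij.1, ij.2] with hF
  have hFapp : ∀ ij : ℕ × ℕ, (F ij) 0 = ij.1 ∧ (F ij) 1 = ij.2 := by
    intro ij
    constructor <;> simp [hF]
  have hFinj : Function.Injective F := by
    intro a b hab
    have h0 : (F a) 0 = (F b) 0 := by rw [hab]
    have h1 : (F a) 1 = (F b) 1 := by rw [hab]
    rw [(hFapp a).1, (hFapp b).1] at h0
    rw [(hFapp a).2, (hFapp b).2] at h1
    exact Prod.ext h0 h1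
  have hdsum : ∀ d : Fin 2 →₀ ℕ, (d.sum fun _ e => e) = d 0 + d 1 := by
    intro d
    rw [Finsupp.sum_fintype]
    · exact Fin.sum_univ_two _
    · intro _; rfl
  have hdeg : ∀ d ∈ p.support, d 0 + d 1 ≤ 2 := by
    intro d hd
    have h1 : (d.sum fun _ e => e) ≤ p.totalDegree :=
      Finset.le_sup (f := fun s : Fin 2 →₀ ℕ => s.sum fun _ e => e) hd
    rw [hdsum] at h1
    omega
  have hrecon : ∀ d : Fin 2 →₀ ℕ, F (d 0, d 1) = d := by
    intro d
    apply Finsupp.ext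
    intro a
    have : (F (d 0, d 1)) a = (![d 0, d 1] : Fin 2 → ℕ) a := by simp [hF]
    rw [this]
    fin_cases a <;> simp
  have hsub : p.support ⊆ (Finset.range 3 ×ˢ Finset.range 3).image F := by
    intro d hd
    refine Finset.mem_image.mpr ⟨(d 0, d 1), ?_, hrecon d⟩
    have := hdeg d hd
    simp only [Finset.mem_product, Finset.mem_range]
    omega
  have key : ∀ y : Fin 2 → ℝ, MvPolynomial.eval y p
      = ∑ ij ∈ Finset.range 3 ×ˢ Finset.range 3,
          MvPolynomial.coeff (F ij) p * (y 0 ^ ij.1 * y 1 ^ ij.2) := by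
    intro y
    have h2 : ∑ d ∈ p.support, MvPolynomial.coeff d p * ∏ i, y i ^ d i
        = ∑ d ∈ (Finset.range 3 ×ˢ Finset.range 3).image F,
            MvPolynomial.coeff d p * ∏ i, y i ^ d i :=
      Finset.sum_subset hsub (fun d _ hd => by
        rw [MvPolynomial.notMem_support_iff.mp hd, zero_mul])
    have h3 : ∑ d ∈ (Finset.range 3 ×ˢ Finset.range 3).image F,
          MvPolynomial.coeff d p * ∏ i, y i ^ d i
        = ∑ ij ∈ Finset.range 3 ×ˢ Finset.range 3,
            MvPolynomial.coeff (F ij) p * ∏ i, y i ^ (F ij) i :=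
      Finset.sum_image (fun a _ b _ h => hFinj h)
    rw [MvPolynomial.eval_eq', h2, h3]
    exact Finset.sum_congr rfl (fun ij _ => by
      rw [Fin.prod_univ_two, (hFapp ij).1, (hFapp ij).2])
  have hzero : ∀ i j : ℕ, 2 < i + j → MvPolynomial.coeff (F (i, j)) p = 0 := by
    intro i j hij
    by_contra h
    have hmem : F (i, j) ∈ p.support := MvPolynomial.mem_support_iff.mpr h
    have := hdeg _ hmem
    rw [(hFapp (i, j)).1, (hFapp (i, j)).2] at this
    omega
  refine ⟨fun i j => MvPolynomial.coeff (F (i, j)) p, fun y => ?_⟩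
  rw [key y]
  rw [Finset.sum_product]
  rw [Finset.sum_range_succ, Finset.sum_range_succ, Finset.sum_range_one]
  simp only [Finset.sum_range_succ, Finset.sum_range_one]
  rw [hzero 1 2 (by omega), hzero 2 1 (by omega), hzero 2 2 (by omega)]
  ring

/-- The fifteen maps `N_{i,1}, N_{i,2}, B_{i,1}, B_{i,2}, B_{i,3}` all belong to `X_T`
and form a basis of `X_T` (in particular `dim X_T = 15`). -/
theorem basis_XT
    (x t n : Fin 3 → Fin 2 → ℝ)
    (hx : AffineIndependent ℝ x)
    (hn : IsOuterNormal x n)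
    (ht_unit : ∀ i, t i ⬝ᵥ t i = 1)
    (ht_par : ∀ i, ∃ c : ℝ, x (i + 2) - x (i + 1) = c • t i)
    (lam : Fin 3 → (Fin 2 → ℝ) → ℝ)
    (hlam_affine : ∀ i, ∃ (g : Fin 2 → ℝ) (c : ℝ), ∀ y, lam i y = g ⬝ᵥ y + c)
    (hlam_val : ∀ i j, lam i (x j) = if i = j then (1 : ℝ) else 0) :
    (∀ p : Fin 3 × Fin 5, MemXT x n (famXT lam t n p)) ∧
    LinearIndependent ℝ (famXT lam t n) ∧
    (∀ τ : (Fin 2 → ℝ) → Matrix (Fin 2) (Fin 2) ℝ, MemXT x n τ →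
      ∃ c : Fin 3 × Fin 5 → ℝ, τ = ∑ p : Fin 3 × Fin 5, c p • famXT lam t n p) := by
  classical
  have hdot : ∀ (g y : Fin 2 → ℝ), g ⬝ᵥ y = g 0 * y 0 + g 1 * y 1 := fun g y => by
    simp [dotProduct, Fin.sum_univ_two]
  have hF1 : ∀ j : Fin 3, j + 1 ≠ j := by decide
  have hF2 : ∀ j : Fin 3, j + 2 ≠ j := by decide
  have hF3 : ∀ j : Fin 3, j + 1 ≠ j + 2 := by decide
  have hF4 : ∀ j : Fin 3, j + 1 + 1 = j + 2 := by decide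
  have hF5 : ∀ j : Fin 3, j + 1 + 2 = j := by decide
  have hF6 : ∀ j : Fin 3, j + 2 + 1 = j := by decide
  have hF7 : ∀ j : Fin 3, j + 2 + 2 = j + 1 := by decide
  have hF8 : ∀ i j : Fin 3, i ≠ j → j = i + 1 ∨ j = i + 2 := by decide
  obtain ⟨cs, hcs⟩ := Classical.axiom_of_choice ht_par
  -- basic geometric scalars
  have hpos1 : ∀ i : Fin 3, 0 < cs i * (n (i + 1) ⬝ᵥ t i) := by
    intro i
    have h := (hn (i + 1)).2.2
    rw [hF4 i, hcs i, dotProduct_smul, smul_eq_mul] at h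
    exact h
  have hcne : ∀ i, cs i ≠ 0 := by
    intro i h
    have := hpos1 i
    rw [h, zero_mul] at this
    exact lt_irrefl 0 this
  have hnt0 : ∀ i : Fin 3, n i ⬝ᵥ t i = 0 := by
    intro i
    have h := (hn i).2.1
    rw [hcs i, dotProduct_smul, smul_eq_mul] at h
    exact (mul_eq_zero.mp h).resolve_left (hcne i)
  have hnt1 : ∀ i : Fin 3, n (i + 1) ⬝ᵥ t i ≠ 0 := by
    intro i h
    have := hpos1 i
    rw [h, mul_zero] at this
    exact lt_irrefl 0 this
  have hneg2 : ∀ i : Fin 3, cs i * (n (i + 2) ⬝ᵥ t i) < 0 := by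
    intro i
    have h1 := (hn (i + 2)).2.1
    rw [hF7 i, hF6 i] at h1
    have h2 := (hn (i + 2)).2.2
    rw [hF6 i] at h2
    have h3 : cs i * (n (i + 2) ⬝ᵥ t i) = n (i + 2) ⬝ᵥ (x (i + 2) - x (i + 1)) := by
      rw [hcs i, dotProduct_smul, smul_eq_mul]
    have h4 : n (i + 2) ⬝ᵥ (x (i + 2) - x (i + 1))
        = -(n (i + 2) ⬝ᵥ (x i - x (i + 2))) - (n (i + 2) ⬝ᵥ (x (i + 1) - x i)) := by
      simp only [hdot, Pi.sub_apply]
      ring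
    rw [h3, h4, h1]
    linarith
  have hnt2 : ∀ i : Fin 3, n (i + 2) ⬝ᵥ t i ≠ 0 := by
    intro i h
    have := hneg2 i
    rw [h, mul_zero] at this
    exact lt_irrefl 0 this
  have hnunit : ∀ k : Fin 3, n k 0 ≠ 0 ∨ n k 1 ≠ 0 := by
    intro k
    by_contra h
    push_neg at h
    have h1 := (hn k).1
    rw [hdot, h.1, h.2] at h1
    norm_num at h1
  have hd : ∀ j k : Fin 3, j ≠ k → n j 0 * n k 1 - n j 1 * n k 0 ≠ 0 := by
    intro j k hjk h0
    have h1 : n k 0 * t k 0 + n k 1 * t k 1 = 0 := by rw [← hdot]; exact hnt0 k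
    have h3 : n j 0 * t k 0 + n j 1 * t k 1 =  0 :=
      XTaux_cross (n k 0) (n k 1) (t k 0) (t k 1) (n j 0) (n j 1) h1 h0 (hnunit k)
    have h4 : n j ⬝ᵥ t k = 0 := by rw [hdot]; exact h3
    rcases hF8 k j hjk.symm with h | h
    · rw [h] at h4; exact hnt1 k h4
    · rw [h] at h4; exact hnt2 k h4
  -- the dual-basis property of the T_i
  have hQ' : ∀ i j : Fin 3, n j ⬝ᵥ (TT t n i).mulVec (n j)
      = ((n i ⬝ᵥ t (i + 1)) * (n i ⬝ᵥ t (i + 2)))⁻¹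
          * ((n j ⬝ᵥ t (i + 1)) * (n j ⬝ᵥ t (i + 2))) := by
    intro i j
    simp only [TT, symPart, Matrix.mulVec, dotProduct, Fin.sum_univ_two,
      Matrix.smul_apply, Matrix.add_apply, Matrix.transpose_apply, Matrix.vecMulVec_apply,
      smul_eq_mul]
    ring
  have hQ : ∀ i j : Fin 3, n j ⬝ᵥ (TT t n i).mulVec (n j) = if i = j then 1 else 0 := by
    intro i j
    rw [hQ']
    by_cases hij : i = j
    · subst hij
      rw [if_pos rfl]
      have e1 : n i ⬝ᵥ t (i + 1) ≠ 0 := by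
        have := hnt2 (i + 1); rw [hF5 i] at this; exact this
      have e2 : n i ⬝ᵥ t (i + 2) ≠ 0 := by
        have := hnt1 (i + 2); rw [hF6 i] at this; exact this
      exact inv_mul_cancel₀ (mul_ne_zero e1 e2)
    · rw [if_neg hij]
      rcases hF8 i j hij with h | h
      · subst h; rw [hnt0 (i + 1), zero_mul, mul_zero]
      · subst h
        rw [hnt0 (i + 2), mul_zero, mul_zero]
  have hsym : ∀ i, (TT t n i)ᵀ = TT t n i := by
    intro i
    ext k l
    simp only [TT, symPart, Matrix.transpose_apply, Matrix.smul_apply, Matrix.add_apply,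
      Matrix.vecMulVec_apply, smul_eq_mul]
    ring
  -- barycentric coordinate facts
  obtain ⟨G, hG⟩ := Classical.axiom_of_choice hlam_affine
  obtain ⟨C, hGC⟩ := Classical.axiom_of_choice hG
  have hGCe : ∀ (k : Fin 3) (y : Fin 2 → ℝ), lam k y = G k 0 * y 0 + G k 1 * y 1 + C k :=
    fun k y => by rw [hGC k y, hdot]
  have hval0 : ∀ i j : Fin 3, i ≠ j → lam i (x j) = 0 := fun i j h => by
    rw [hlam_val, if_neg h]
  have hval1 : ∀ i : Fin 3, lam i (x i) = 1 := fun i => by rw [hlam_val, if_pos rfl]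
  have hlam_edge : ∀ (k i : Fin 3) (s : ℝ),
      lam k (edgePt x i s) = (1 - s) * lam k (x (i + 1)) + s * lam k (x (i + 2)) := by
    intro k i s
    simp only [edgePt, hGCe, Pi.add_apply, Pi.smul_apply, smul_eq_mul]
    ring
  have hle0 : ∀ (i : Fin 3) (s : ℝ), lam i (edgePt x i s) = 0 := by
    intro i s
    rw [hlam_edge, hval0 i (i + 1) (hF1 i).symm, hval0 i (i + 2) (hF2 i).symm]
    ring
  have hle1 : ∀ (i : Fin 3) (s : ℝ), lam (i + 1) (edgePt x i s) = 1 - s := by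
    intro i s
    rw [hlam_edge, hval1 (i + 1), hval0 (i + 1) (i + 2) (hF3 i)]
    ring
  have hle2 : ∀ (i : Fin 3) (s : ℝ), lam (i + 2) (edgePt x i s) = s := by
    intro i s
    rw [hlam_edge, hval1 (i + 2), hval0 (i + 2) (i + 1) (hF3 i).symm]
    ring
  -- nondegeneracy of the triangle, from the normals
  have hn2u : n 2 0 * (x 1 0 - x 0 0) + n 2 1 * (x 1 1 - x 0 1) = 0 := by
    have h := (hn 2).2.1
    rw [show (2 : Fin 3) + 2 = 1 by decide, show (2 : Fin 3) + 1 = 0 by decide, hdot] at h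
    simpa [Pi.sub_apply] using h
  have hn2v : n 2 0 * (x 2 0 - x 0 0) + n 2 1 * (x 2 1 - x 0 1) ≠ 0 := by
    have h2 := (hn 2).2.2
    rw [show (2 : Fin 3) + 1 = 0 by decide, hdot] at h2
    simp only [Pi.sub_apply] at h2
    intro h
    nlinarith
  have hx10 : (x 1 0 - x 0 0) ≠ 0 ∨ (x 1 1 - x 0 1) ≠ 0 := by
    have h0 := (hn 0).2.2
    rw [show (0 : Fin 3) + 1 = 1 by decide, hdot] at h0
    simp only [Pi.sub_apply] at h0
    by_contra h
    push_neg at h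
    rw [h.1, h.2] at h0
    norm_num at h0
  have hD : (x 1 0 - x 0 0) * (x 2 1 - x 0 1) - (x 1 1 - x 0 1) * (x 2 0 - x 0 0) ≠ 0 := by
    intro h0
    have h := XTaux_cross (x 1 0 - x 0 0) (x 1 1 - x 0 1) (n 2 0) (n 2 1)
      (x 2 0 - x 0 0) (x 2 1 - x 0 1) (by linear_combination hn2u) (by linear_combination -h0)
      hx10
    exact hn2v (by linear_combination h)
  -- vanishing of affine functions vanishing at the vertices
  have hu : ∀ g0 g1 c : ℝ, (g0 * x 0 0 + g1 * x 0 1 + c = 0) →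
      (g0 * x 1 0 + g1 * x 1 1 + c = 0) → (g0 * x 2 0 + g1 * x 2 1 + c = 0) →
      ∀ y : Fin 2 → ℝ, g0 * y 0 + g1 * y 1 + c = 0 := by
    intro g0 g1 c h0 h1 h2 y
    have e1 : g0 * (x 1 0 - x 0 0) + g1 * (x 1 1 - x 0 1) = 0 := by linear_combination h1 - h0
    have e2 : g0 * (x 2 0 - x 0 0) + g1 * (x 2 1 - x 0 1) = 0 := by linear_combination h2 - h0
    have hg0 : g0 * ((x 1 0 - x 0 0) * (x 2 1 - x 0 1) - (x 1 1 - x 0 1) * (x 2 0 - x 0 0)) = 0 := by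
      linear_combination (x 2 1 - x 0 1) * e1 - (x 1 1 - x 0 1) * e2
    have hg1 : g1 * ((x 1 0 - x 0 0) * (x 2 1 - x 0 1) - (x 1 1 - x 0 1) * (x 2 0 - x 0 0)) = 0 := by
      linear_combination (x 1 0 - x 0 0) * e2 - (x 2 0 - x 0 0) * e1
    have hg0' : g0 = 0 := (mul_eq_zero.mp hg0).resolve_right hD
    have hg1' : g1 = 0 := (mul_eq_zero.mp hg1).resolve_right hD
    have hc : c = 0 := by rw [hg0', hg1'] at h0; linarith
    rw [hg0', hg1', hc]; ring
  -- partition of unity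
  have hsum1 : ∀ y : Fin 2 → ℝ, lam 0 y + lam 1 y + lam 2 y = 1 := by
    have key := hu (G 0 0 + G 1 0 + G 2 0) (G 0 1 + G 1 1 + G 2 1) (C 0 + C 1 + C 2 - 1)
      (by linear_combination (-(hGCe 0 (x 0)) - hGCe 1 (x 0) - hGCe 2 (x 0)) + hval1 0
          + hval0 1 0 (by decide) + hval0 2 0 (by decide))
      (by linear_combination (-(hGCe 0 (x 1)) - hGCe 1 (x 1) - hGCe 2 (x 1)) + hval1 1
          + hval0 0 1 (by decide) + hval0 2 1 (by decide))
      (by linear_combination (-(hGCe 0 (x 2)) - hGCe 1 (x 2) - hGCe 2 (x 2)) + hval1 2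
          + hval0 0 2 (by decide) + hval0 1 2 (by decide))
    intro y
    have h := key y
    linear_combination h + hGCe 0 y + hGCe 1 y + hGCe 2 y
  -- barycentric representation of the coordinates
  have hcoord0 : ∀ (y : Fin 2 → ℝ),
      y 0 = lam 0 y * x 0 0 + lam 1 y * x 1 0 + lam 2 y * x 2 0 := by
    have key := hu (x 0 0 * G 0 0 + x 1 0 * G 1 0 + x 2 0 * G 2 0 - 1)
      (x 0 0 * G 0 1 + x 1 0 * G 1 1 + x 2 0 * G 2 1)
      (x 0 0 * C 0 + x 1 0 * C 1 + x 2 0 * C 2)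
      (by linear_combination (-(x 0 0) * hGCe 0 (x 0) - x 1 0 * hGCe 1 (x 0)
          - x 2 0 * hGCe 2 (x 0)) + x 0 0 * hval1 0 + x 1 0 * hval0 1 0 (by decide)
          + x 2 0 * hval0 2 0 (by decide))
      (by linear_combination (-(x 0 0) * hGCe 0 (x 1) - x 1 0 * hGCe 1 (x 1)
          - x 2 0 * hGCe 2 (x 1)) + x 1 0 * hval1 1 + x 0 0 * hval0 0 1 (by decide)
          + x 2 0 * hval0 2 1 (by decide))
      (by linear_combination (-(x 0 0) * hGCe 0 (x 2) - x 1 0 * hGCe 1 (x 2)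
          - x 2 0 * hGCe 2 (x 2)) + x 2 0 * hval1 2 + x 0 0 * hval0 0 2 (by decide)
          + x 1 0 * hval0 1 2 (by decide))
    intro y
    have h := key y
    linear_combination -h - x 0 0 * hGCe 0 y - x 1 0 * hGCe 1 y - x 2 0 * hGCe 2 y
  have hcoord1 : ∀ (y : Fin 2 → ℝ),
      y 1 = lam 0 y * x 0 1 + lam 1 y * x 1 1 + lam 2 y * x 2 1 := by
    have key := hu (x 0 1 * G 0 0 + x 1 1 * G 1 0 + x 2 1 * G 2 0)
      (x 0 1 * G 0 1 + x 1 1 * G 1 1 + x 2 1 * G 2 1 - 1)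
      (x 0 1 * C 0 + x 1 1 * C 1 + x 2 1 * C 2)
      (by linear_combination (-(x 0 1) * hGCe 0 (x 0) - x 1 1 * hGCe 1 (x 0)
          - x 2 1 * hGCe 2 (x 0)) + x 0 1 * hval1 0 + x 1 1 * hval0 1 0 (by decide)
          + x 2 1 * hval0 2 0 (by decide))
      (by linear_combination (-(x 0 1) * hGCe 0 (x 1) - x 1 1 * hGCe 1 (x 1)
          - x 2 1 * hGCe 2 (x 1)) + x 1 1 * hval1 1 + x 0 1 * hval0 0 1 (by decide)
          + x 2 1 * hval0 2 1 (by decide))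
      (by linear_combination (-(x 0 1) * hGCe 0 (x 2) - x 1 1 * hGCe 1 (x 2)
          - x 2 1 * hGCe 2 (x 2)) + x 2 1 * hval1 2 + x 0 1 * hval0 0 2 (by decide)
          + x 1 1 * hval0 1 2 (by decide))
    intro y
    have h := key y
    linear_combination -h - x 0 1 * hGCe 0 y - x 1 1 * hGCe 1 y - x 2 1 * hGCe 2 y
  -- quadratic representation in barycentric coordinates
  have hquad : ∀ f : (Fin 2 → ℝ) → ℝ, IsPolyDeg2 f →
      ∃ M : Fin 3 → Fin 3 → ℝ, ∀ y,
        f y = ∑ a : Fin 3, ∑ b : Fin 3, M a b * (lam a y * lam b y) := by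
    rintro f ⟨p, hpdeg, hf⟩
    obtain ⟨A, hA⟩ := XTaux_poly2_repr p hpdeg
    refine ⟨fun a b => A 0 0 + A 1 0 * x a 0 + A 0 1 * x a 1 + A 2 0 * (x a 0 * x b 0)
      + A 1 1 * (x a 0 * x b 1) + A 0 2 * (x a 1 * x b 1), fun y => ?_⟩
    rw [hf y, hA y]
    simp only [Fin.sum_univ_three]
    rw [hcoord0 y, hcoord1 y]
    have h1 := hsum1 y
    linear_combination (-(A 0 0) * (lam 0 y + lam 1 y + lam 2 y + 1)
      - A 1 0 * (lam 0 y * x 0 0 + lam 1 y * x 1 0 + lam 2 y * x 2 0)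
      - A 0 1 * (lam 0 y * x 0 1 + lam 1 y * x 1 1 + lam 2 y * x 2 1)) * h1
  have hsig : ∀ (j : Fin 3) (y : Fin 2 → ℝ), lam j y + lam (j + 1) y + lam (j + 2) y = 1 := by
    intro j y
    have h := hsum1 y
    fin_cases j
    · show lam 0 y + lam 1 y + lam 2 y = 1; linarith
    · show lam 1 y + lam 2 y + lam 0 y = 1; linarith
    · show lam 2 y + lam 0 y + lam 1 y = 1; linarith
  have hswap : ∀ (j : Fin 3) (H : Fin 3 → ℝ), ∑ a : Fin 3, H a = ∑ a : Fin 3, H (j + a) :=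
    fun j H => (Fintype.sum_equiv (Equiv.addLeft j) _ _ (fun _ => rfl)).symm
  have hrel : ∀ (j : Fin 3) (f : (Fin 2 → ℝ) → ℝ), IsPolyDeg2 f →
      ∃ m : Fin 3 → Fin 3 → ℝ, ∀ y,
        f y = ∑ a : Fin 3, ∑ b : Fin 3, m a b * (lam (j + a) y * lam (j + b) y) := by
    intro j f hf
    obtain ⟨M, hM⟩ := hquad f hf
    refine ⟨fun a b => M (j + a) (j + b), fun y => ?_⟩
    rw [hM y, hswap j (fun a => ∑ b : Fin 3, M a b * (lam a y * lam b y))]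
    exact Finset.sum_congr rfl (fun a _ =>
      hswap j (fun b => M (j + a) b * (lam (j + a) y * lam b y)))
  -- main structure lemma for quadratics affine on edge j
  have hV5 : ∀ (j : Fin 3) (f : (Fin 2 → ℝ) → ℝ), IsPolyDeg2 f →
      (∃ a b : ℝ, ∀ s : ℝ, f (edgePt x j s) = a * s + b) →
      ∃ c0 c1 c2 c3 c4 : ℝ, ∀ y, f y = c0 + c1 * (lam (j + 2) y - lam (j + 1) y)
        + c2 * lam j y + c3 * (lam j y * lam (j + 1) y) + c4 * (lam j y * lam (j + 2) y) := by
    intro j f hf hedge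
    obtain ⟨m, hm⟩ := hrel j f hf
    refine ⟨m 0 0 - ((-(m 0 0 - m 0 1 - m 1 0 + m 1 1)) + (-(m 0 0 - m 0 2 - m 2 0 + m 2 2))
        + 4 * m 0 0 - m 0 1 - m 1 0 - m 0 2 - m 2 0) / 2,
      ((-(m 0 0 - m 0 1 - m 1 0 + m 1 1)) + (-(m 0 0 - m 0 2 - m 2 0 + m 2 2))
        + 4 * m 0 0 - m 0 1 - m 1 0 - m 0 2 - m 2 0) / 2 - (-(m 0 0 - m 0 2 - m 2 0 + m 2 2))
        - 2 * m 0 0 + m 0 2 + m 2 0,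
      ((-(m 0 0 - m 0 1 - m 1 0 + m 1 1)) + (-(m 0 0 - m 0 2 - m 2 0 + m 2 2))
        + 4 * m 0 0 - m 0 1 - m 1 0 - m 0 2 - m 2 0) / 2,
      -(m 0 0 - m 0 1 - m 1 0 + m 1 1), -(m 0 0 - m 0 2 - m 2 0 + m 2 2), ?_⟩
    set c3 : ℝ := -(m 0 0 - m 0 1 - m 1 0 + m 1 1) with hc3
    set c4 : ℝ := -(m 0 0 - m 0 2 - m 2 0 + m 2 2) with hc4
    set bb : ℝ := m 1 2 + m 2 1 - m 1 1 - m 2 2 with hbb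
    set c2 : ℝ := (c3 + c4 + 4 * m 0 0 - m 0 1 - m 1 0 - m 0 2 - m 2 0) / 2 with hc2
    set c0 : ℝ := m 0 0 - c2 with hc0
    set c1 : ℝ := c2 - c4 - 2 * m 0 0 + m 0 2 + m 2 0 with hc1
    have hrepr : ∀ y, f y = c0 + c1 * (lam (j + 2) y - lam (j + 1) y) + c2 * lam j y
        + c3 * (lam j y * lam (j + 1) y) + c4 * (lam j y * lam (j + 2) y)
        + bb * (lam (j + 1) y * lam (j + 2) y) := by
      intro y
      rw [hm y]
      simp only [Fin.sum_univ_three, add_zero]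
      have hs := hsig j y
      rw [show lam j y = 1 - lam (j + 1) y - lam (j + 2) y by linarith]
      rw [hc0, hc1, hc2, hc3, hc4, hbb]
      ring
    obtain ⟨a, b, hab⟩ := hedge
    have E : ∀ s : ℝ, c0 + c1 * (2 * s - 1) + bb * ((1 - s) * s) = a * s + b := by
      intro s
      have h := hab s
      rw [hrepr (edgePt x j s), hle0 j s, hle1 j s, hle2 j s] at h
      linear_combination h
    have E0 := E 0
    have E1 := E 1
    have Eh := E (1 / 2)
    have hbb0 : bb = 0 := by
      norm_num at E0 E1 Eh
      linarith
    intro y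
    have h := hrepr y
    rw [hbb0] at h
    linear_combination h
  -- separation: a symmetric matrix with vanishing normal quadratic forms is zero
  have hsep : ∀ B : Matrix (Fin 2) (Fin 2) ℝ, Bᵀ = B →
      (∀ k : Fin 3, n k ⬝ᵥ B.mulVec (n k) = 0) → B = 0 := by
    intro B hBt hqB
    have hb : B 1 0 = B 0 1 := by
      have h := congrFun (congrFun hBt 0) 1
      simpa [Matrix.transpose_apply] using h
    have hE : ∀ k : Fin 3,
        B 0 0 * (n k 0) ^ 2 + 2 * B 0 1 * (n k 0 * n k 1) + B 1 1 * (n k 1) ^ 2 = 0 := by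
      intro k
      have h := hqB k
      simp only [Matrix.mulVec, dotProduct, Fin.sum_univ_two] at h
      rw [hb] at h
      linear_combination h
    obtain ⟨h1, h2, h3⟩ := XTaux_cramer (n 0 0) (n 0 1) (n 1 0) (n 1 1) (n 2 0) (n 2 1)
      (B 0 0) (B 0 1) (B 1 1) (hE 0) (hE 1) (hE 2)
      (hd 0 1 (by decide)) (hd 0 2 (by decide)) (hd 1 2 (by decide))
    ext i j
    fin_cases i <;> fin_cases j
    · simpa using h1
    · simpa using h2
    · rw [show ((⟨1, by omega⟩ : Fin 2)) = 1 from rfl, show ((⟨0, by omega⟩ : Fin 2)) = 0 from rfl,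
        hb]
      simpa using h2
    · simpa using h3
  -- decomposition of symmetric matrices along the T_i
  have hdecomp : ∀ A : Matrix (Fin 2) (Fin 2) ℝ, Aᵀ = A →
      A = ∑ j : Fin 3, (n j ⬝ᵥ A.mulVec (n j)) • TT t n j := by
    intro A hAt
    have hsum_sym : (∑ j : Fin 3, (n j ⬝ᵥ A.mulVec (n j)) • TT t n j)ᵀ
        = ∑ j : Fin 3, (n j ⬝ᵥ A.mulVec (n j)) • TT t n j := by
      rw [Matrix.transpose_sum]
      exact Finset.sum_congr rfl (fun jj _ => by rw [Matrix.transpose_smul, hsym jj])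
    have hqB : ∀ k : Fin 3,
        n k ⬝ᵥ (A - ∑ j : Fin 3, (n j ⬝ᵥ A.mulVec (n j)) • TT t n j).mulVec (n k) = 0 := by
      intro k
      rw [Matrix.sub_mulVec, dotProduct_sub, XTaux_qsum]
      have : ∀ j : Fin 3, n k ⬝ᵥ ((n j ⬝ᵥ A.mulVec (n j)) • TT t n j).mulVec (n k)
          = if j = k then n j ⬝ᵥ A.mulVec (n j) else 0 := by
        intro j
        rw [XTaux_qsmul, hQ]
        split_ifs <;> ring
      rw [Finset.sum_congr rfl (fun j _ => this j), Finset.sum_ite_eq']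
      simp
    have hB := hsep _ (by rw [Matrix.transpose_sub, hAt, hsum_sym]) hqB
    exact sub_eq_zero.mp hB
  -- polynomial witnesses for the barycentric coordinates
  have hPl' : ∀ i : Fin 3, ∃ q : MvPolynomial (Fin 2) ℝ, q.totalDegree ≤ 1 ∧
      ∀ y, lam i y = MvPolynomial.eval y q := by
    intro i
    obtain ⟨q, h1, h2⟩ := XTaux_affine_poly (G i) (C i)
    exact ⟨q, h1, fun y => by rw [hGC i y]; exact h2 y⟩
  obtain ⟨Pl, hPl⟩ := Classical.axiom_of_choice hPl'
  -- rfl-lemmas for the five members of the family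
  have hfam0 : ∀ (i : Fin 3) (y : Fin 2 → ℝ), famXT lam t n (i, 0) y = TT t n i :=
    fun _ _ => rfl
  have hfam1 : ∀ (i : Fin 3) (y : Fin 2 → ℝ),
      famXT lam t n (i, 1) y = (lam (i + 2) y - lam (i + 1) y) • TT t n i := fun _ _ => rfl
  have hfam2 : ∀ (i : Fin 3) (y : Fin 2 → ℝ),
      famXT lam t n (i, 2) y = lam i y • TT t n i := fun _ _ => rfl
  have hfam3 : ∀ (i : Fin 3) (y : Fin 2 → ℝ),
      famXT lam t n (i, 3) y = (lam i y * lam (i + 1) y) • TT t n i := fun _ _ => rfl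
  have hfam4 : ∀ (i : Fin 3) (y : Fin 2 → ℝ),
      famXT lam t n (i, 4) y = (lam i y * lam (i + 2) y) • TT t n i := fun _ _ => rfl
  have hq5 : ∀ (c : Fin 3 × Fin 5 → ℝ) (j : Fin 3) (y : Fin 2 → ℝ),
      n j ⬝ᵥ (∑ p : Fin 3 × Fin 5, c p • famXT lam t n p y).mulVec (n j)
      = c (j, 0) + c (j, 1) * (lam (j + 2) y - lam (j + 1) y) + c (j, 2) * lam j y
        + c (j, 3) * (lam j y * lam (j + 1) y) + c (j, 4) * (lam j y * lam (j + 2) y) := by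
    intro c j y
    rw [XTaux_qsum, Fintype.sum_prod_type]
    have hinner : ∀ i : Fin 3,
        ∑ k : Fin 5, n j ⬝ᵥ (c (i, k) • famXT lam t n (i, k) y).mulVec (n j)
        = if i = j then (c (i, 0) + c (i, 1) * (lam (i + 2) y - lam (i + 1) y)
            + c (i, 2) * lam i y + c (i, 3) * (lam i y * lam (i + 1) y)
            + c (i, 4) * (lam i y * lam (i + 2) y)) else 0 := by
      intro i
      rw [Fin.sum_univ_five]
      beta_reduce
      rw [hfam0 i y, hfam1 i y, hfam2 i y, hfam3 i y, hfam4 i y]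
      simp only [XTaux_qsmul, hQ i j]
      split_ifs <;> ring
    rw [Finset.sum_congr rfl (fun i _ => hinner i), Finset.sum_ite_eq']
    simp
  refine ⟨?_, ?_, ?_⟩
  · -- Part 1: membership
    rintro ⟨i, k⟩
    by_cases h0 : k = 0
    · subst h0
      refine ⟨fun y => ?_, fun kk ll => ?_, fun e => ?_⟩
      · rw [hfam0]; exact hsym i
      · exact ⟨MvPolynomial.C (TT t n i kk ll), by simp, fun y => by
          beta_reduce
          rw [hfam0, MvPolynomial.eval_C]⟩
      · rcases eq_or_ne i e with rfl | hne
        · exact ⟨0, 1, fun s => by rw [hfam0, hQ, if_pos rfl]; ring⟩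
        · exact ⟨0, 0, fun s => by rw [hfam0, hQ, if_neg hne]; ring⟩
    by_cases h1 : k = 1
    · subst h1
      refine ⟨fun y => ?_, fun kk ll => ?_, fun e => ?_⟩
      · rw [hfam1, Matrix.transpose_smul, hsym]
      · refine ⟨(Pl (i + 2) - Pl (i + 1)) * MvPolynomial.C (TT t n i kk ll), ?_, fun y => ?_⟩
        · refine le_trans (MvPolynomial.totalDegree_mul _ _) ?_
          have hsub := le_trans (MvPolynomial.totalDegree_sub _ _)
            (max_le (hPl (i + 2)).1 (hPl (i + 1)).1)
          simp only [MvPolynomial.totalDegree_C, add_zero]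
          omega
        · beta_reduce
          rw [hfam1, MvPolynomial.eval_mul, MvPolynomial.eval_sub, MvPolynomial.eval_C,
            ← (hPl (i + 2)).2 y, ← (hPl (i + 1)).2 y, Matrix.smul_apply, smul_eq_mul]
      · rcases eq_or_ne i e with rfl | hne
        · exact ⟨2, -1, fun s => by
            rw [hfam1, XTaux_qsmul, hQ, if_pos rfl, hle1, hle2]; ring⟩
        · exact ⟨0, 0, fun s => by rw [hfam1, XTaux_qsmul, hQ, if_neg hne]; ring⟩
    by_cases h2 : k = 2
    · subst h2
      refine ⟨fun y => ?_, fun kk ll => ?_, fun e => ?_⟩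
      · rw [hfam2, Matrix.transpose_smul, hsym]
      · refine ⟨Pl i * MvPolynomial.C (TT t n i kk ll), ?_, fun y => ?_⟩
        · refine le_trans (MvPolynomial.totalDegree_mul _ _) ?_
          have := (hPl i).1
          simp only [MvPolynomial.totalDegree_C, add_zero]
          omega
        · beta_reduce
          rw [hfam2, MvPolynomial.eval_mul, MvPolynomial.eval_C, ← (hPl i).2 y,
            Matrix.smul_apply, smul_eq_mul]
      · rcases eq_or_ne i e with rfl | hne
        · exact ⟨0, 0, fun s => by rw [hfam2, XTaux_qsmul, hQ, if_pos rfl, hle0]; ring⟩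
        · exact ⟨0, 0, fun s => by rw [hfam2, XTaux_qsmul, hQ, if_neg hne]; ring⟩
    by_cases h3 : k = 3
    · subst h3
      refine ⟨fun y => ?_, fun kk ll => ?_, fun e => ?_⟩
      · rw [hfam3, Matrix.transpose_smul, hsym]
      · refine ⟨Pl i * Pl (i + 1) * MvPolynomial.C (TT t n i kk ll), ?_, fun y => ?_⟩
        · refine le_trans (MvPolynomial.totalDegree_mul _ _) ?_
          have hm := le_trans (MvPolynomial.totalDegree_mul (Pl i) (Pl (i + 1)))
            (add_le_add (hPl i).1 (hPl (i + 1)).1)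
          simp only [MvPolynomial.totalDegree_C, add_zero]
          omega
        · beta_reduce
          rw [hfam3, MvPolynomial.eval_mul, MvPolynomial.eval_mul, MvPolynomial.eval_C,
            ← (hPl i).2 y, ← (hPl (i + 1)).2 y, Matrix.smul_apply, smul_eq_mul]
      · rcases eq_or_ne i e with rfl | hne
        · exact ⟨0, 0, fun s => by rw [hfam3, XTaux_qsmul, hQ, if_pos rfl, hle0]; ring⟩
        · exact ⟨0, 0, fun s => by rw [hfam3, XTaux_qsmul, hQ, if_neg hne]; ring⟩
    · have hfamk : ∀ y : Fin 2 → ℝ,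
          famXT lam t n (i, k) y = (lam i y * lam (i + 2) y) • TT t n i := by
        intro y
        simp only [famXT, h0, h1, h2, h3, if_false]
      refine ⟨fun y => ?_, fun kk ll => ?_, fun e => ?_⟩
      · rw [hfamk, Matrix.transpose_smul, hsym]
      · refine ⟨Pl i * Pl (i + 2) * MvPolynomial.C (TT t n i kk ll), ?_, fun y => ?_⟩
        · refine le_trans (MvPolynomial.totalDegree_mul _ _) ?_
          have hm := le_trans (MvPolynomial.totalDegree_mul (Pl i) (Pl (i + 2)))
            (add_le_add (hPl i).1 (hPl (i + 2)).1)
          simp only [MvPolynomial.totalDegree_C, add_zero]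
          omega
        · beta_reduce
          rw [hfamk, MvPolynomial.eval_mul, MvPolynomial.eval_mul, MvPolynomial.eval_C,
            ← (hPl i).2 y, ← (hPl (i + 2)).2 y, Matrix.smul_apply, smul_eq_mul]
      · rcases eq_or_ne i e with rfl | hne
        · exact ⟨0, 0, fun s => by rw [hfamk, XTaux_qsmul, hQ, if_pos rfl, hle0]; ring⟩
        · exact ⟨0, 0, fun s => by rw [hfamk, XTaux_qsmul, hQ, if_neg hne]; ring⟩
  · -- Part 2: linear independence
    rw [Fintype.linearIndependent_iff]
    intro c hc
    have hcy : ∀ y : Fin 2 → ℝ, ∑ p : Fin 3 × Fin 5, c p • famXT lam t n p y = 0 := by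
      intro y
      have h := congrFun hc y
      rw [Finset.sum_apply] at h
      simpa [Pi.smul_apply] using h
    have hGz : ∀ (j : Fin 3) (y : Fin 2 → ℝ),
        c (j, 0) + c (j, 1) * (lam (j + 2) y - lam (j + 1) y) + c (j, 2) * lam j y
          + c (j, 3) * (lam j y * lam (j + 1) y) + c (j, 4) * (lam j y * lam (j + 2) y) = 0 := by
      intro j y
      rw [← hq5 c j y, hcy y]
      simp
    have hz : ∀ j : Fin 3, c (j, 0) = 0 ∧ c (j, 1) = 0 ∧ c (j, 2) = 0 ∧ c (j, 3) = 0
        ∧ c (j, 4) = 0 := by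
      intro j
      have e0 := hGz j (edgePt x j 0)
      rw [hle0, hle1, hle2] at e0
      have e1 := hGz j (edgePt x j 1)
      rw [hle0, hle1, hle2] at e1
      have e2 := hGz j (x j)
      rw [hval1 j, hval0 (j + 1) j (hF1 j), hval0 (j + 2) j (hF2 j)] at e2
      have e3 := hGz j (edgePt x (j + 2) (1 / 2))
      have m1 : lam j (edgePt x (j + 2) (1 / 2)) = 1 / 2 := by
        have h := hle1 (j + 2) (1 / 2)
        rw [hF6 j] at h
        rw [h]; norm_num
      have m2 : lam (j + 1) (edgePt x (j + 2) (1 / 2)) = 1 / 2 := by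
        have h := hle2 (j + 2) (1 / 2)
        rw [hF7 j] at h
        exact h
      have m3 : lam (j + 2) (edgePt x (j + 2) (1 / 2)) = 0 := hle0 (j + 2) (1 / 2)
      rw [m1, m2, m3] at e3
      have e4 := hGz j (edgePt x (j + 1) (1 / 2))
      have m4 : lam j (edgePt x (j + 1) (1 / 2)) = 1 / 2 := by
        have h := hle2 (j + 1) (1 / 2)
        rw [hF5 j] at h
        exact h
      have m5 : lam (j + 1) (edgePt x (j + 1) (1 / 2)) = 0 := hle0 (j + 1) (1 / 2)
      have m6 : lam (j + 2) (edgePt x (j + 1) (1 / 2)) = 1 / 2 := by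
        have h := hle1 (j + 1) (1 / 2)
        rw [hF4 j] at h
        rw [h]; norm_num
      rw [m4, m5, m6] at e4
      norm_num at e0 e1 e2 e3 e4
      refine ⟨?_, ?_, ?_, ?_, ?_⟩ <;> linarith
    rintro ⟨j, k⟩
    obtain ⟨z0, z1, z2, z3, z4⟩ := hz j
    by_cases h0 : k = 0
    · subst h0; exact z0
    by_cases h1 : k = 1
    · subst h1; exact z1
    by_cases h2 : k = 2
    · subst h2; exact z2
    by_cases h3 : k = 3
    · subst h3; exact z3
    have h4 : k = 4 := by omega
    subst h4; exact z4
  · -- Part 3: spanning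
    rintro τ ⟨hτsym, hτpoly, hτedge⟩
    have hfpoly : ∀ j : Fin 3, IsPolyDeg2 (fun y => n j ⬝ᵥ (τ y).mulVec (n j)) := by
      intro j
      obtain ⟨p00, hq00, he00⟩ := hτpoly 0 0
      obtain ⟨p01, hq01, he01⟩ := hτpoly 0 1
      obtain ⟨p10, hq10, he10⟩ := hτpoly 1 0
      obtain ⟨p11, hq11, he11⟩ := hτpoly 1 1
      have bdd : ∀ (r : ℝ) (q : MvPolynomial (Fin 2) ℝ), q.totalDegree ≤ 2 →
          (MvPolynomial.C r * q).totalDegree ≤ 2 := fun r q hq =>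
        le_trans (MvPolynomial.totalDegree_mul _ _) (by simpa using hq)
      refine ⟨MvPolynomial.C (n j 0 * n j 0) * p00 + MvPolynomial.C (n j 0 * n j 1) * p01
        + MvPolynomial.C (n j 1 * n j 0) * p10 + MvPolynomial.C (n j 1 * n j 1) * p11,
        ?_, fun y => ?_⟩
      · refine le_trans (MvPolynomial.totalDegree_add _ _) (max_le (le_trans
          (MvPolynomial.totalDegree_add _ _) (max_le (le_trans (MvPolynomial.totalDegree_add _ _)
          (max_le (bdd _ _ hq00) (bdd _ _ hq01))) (bdd _ _ hq10))) (bdd _ _ hq11))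
      · beta_reduce
        simp only [Matrix.mulVec, dotProduct, Fin.sum_univ_two]
        have u00 := he00 y
        have u01 := he01 y
        have u10 := he10 y
        have u11 := he11 y
        beta_reduce at u00 u01 u10 u11
        rw [u00, u01, u10, u11]
        simp only [_root_.map_add, _root_.map_mul, MvPolynomial.eval_C]
        ring
    have hkey : ∀ j : Fin 3, ∃ c0 c1 c2 c3 c4 : ℝ, ∀ y,
        n j ⬝ᵥ (τ y).mulVec (n j) = c0 + c1 * (lam (j + 2) y - lam (j + 1) y) + c2 * lam j y
          + c3 * (lam j y * lam (j + 1) y) + c4 * (lam j y * lam (j + 2) y) := by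
      intro j
      obtain ⟨a, b, hab⟩ := hτedge j
      exact hV5 j _ (hfpoly j) ⟨a, b, fun s => hab s⟩
    choose d0 d1 d2 d3 d4 hdc using hkey
    refine ⟨fun p => if p.2 = 0 then d0 p.1 else if p.2 = 1 then d1 p.1
      else if p.2 = 2 then d2 p.1 else if p.2 = 3 then d3 p.1 else d4 p.1, ?_⟩
    funext y
    rw [hdecomp (τ y) (hτsym y), Finset.sum_apply]
    simp only [Pi.smul_apply]
    rw [Fintype.sum_prod_type]
    refine Finset.sum_congr rfl (fun j _ => ?_)
    rw [Fin.sum_univ_five]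
    beta_reduce
    rw [hfam0 j y, hfam1 j y, hfam2 j y, hfam3 j y, hfam4 j y]
    simp only [Fin.reduceEq, reduceIte]
    rw [smul_smul, smul_smul, smul_smul, smul_smul,
      ← add_smul, ← add_smul, ← add_smul, ← add_smul]
    rw [hdc j y]
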